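/- arXiv:2306.05039 — 5 statements merged into one kernel-verified Lean document; each statement's English description precedes it below -/
import Mathlib

section
/- Let n, q, s be natural numbers with q < s ≤ n, gcd(q,s) = 1, and q + s > n. Then there exist unique integers p and r with 0 ≤ p < q and 0 ≤ r < s such that (p/q, r/s) is a Farey pair of order n, i.e., such that qr - ps = 1. -/
/-- For q < s ≤ n with gcd(q,s) = 1 and q + s > n, there exist unique
p < q and r < s such that (p/q, r/s) is a Farey pair of order n, i.e. qr - ps = 1. -/
theorem farey_pair_exists_unique (n q s : ℕ) (hqs : q < s) (hsn : s ≤ n)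
    (hg : Nat.gcd q s = 1) (hn : n < q + s) :
    ∃! pr : ℕ × ℕ, pr.1 < q ∧ pr.2 < s ∧ (q : ℤ) * pr.2 - (pr.1 : ℤ) * s = 1 := by
  have hs0 : 0 < s := lt_of_le_of_lt (Nat.zero_le q) hqs
  have hq0 : 0 < q := by
    rcases Nat.eq_zero_or_pos q with h | h
    · subst h; simp [Nat.gcd] at hg; omega
    · exact h
  have hs2 : 2 ≤ s := by omega
  haveI : NeZero s := ⟨hs0.ne'⟩
  set r : ℕ := ((q : ZMod s)⁻¹).val with hrdef
  have hrs : r < s := ZMod.val_lt _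
  have hdvd : (s : ℤ) ∣ (q : ℤ) * r - 1 := by
    have h1 : ((q : ZMod s) * (q : ZMod s)⁻¹) = 1 := ZMod.coe_mul_inv_eq_one q hg
    have h2 : (((q : ℤ) * r - 1 : ℤ) : ZMod s) = 0 := by
      push_cast
      rw [show ((r : ℕ) : ZMod s) = (q : ZMod s)⁻¹ by
        rw [hrdef, ZMod.natCast_val, ZMod.cast_id], h1]
      ring
    exact (ZMod.intCast_zmod_eq_zero_iff_dvd _ s).mp h2
  have hr0 : 0 < r := by
    by_contra h
    have : r = 0 := by omega
    rw [this] at hdvd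
    have h' : (s : ℤ) ∣ 1 := (dvd_neg).mp (by simpa using hdvd)
    have := Int.le_of_dvd one_pos h'
    omega
  obtain ⟨k, hk⟩ := hdvd
  have hk0 : 0 ≤ k := by nlinarith [hs0, hq0, hr0]
  have hkq : k < q := by nlinarith [hrs, hs0]
  refine ⟨(k.toNat, r), ⟨by omega, hrs, by push_cast [Int.toNat_of_nonneg hk0]; linarith⟩, ?_⟩
  rintro ⟨p', r'⟩ ⟨hp', hr', heq⟩
  simp only at *
  -- uniqueness: s ∣ q*(r - r'), coprime, |r - r'| < s
  have hdvd2 : (s : ℤ) ∣ (q : ℤ) * ((r : ℤ) - r') := by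
    refine ⟨k - p', ?_⟩
    have hk' : (q : ℤ) * r - 1 = s * k := hk
    push_cast at heq ⊢
    ring_nf
    ring_nf at hk' heq
    linarith
  have hcop : IsCoprime (q : ℤ) (s : ℤ) := by
    rw [Int.isCoprime_iff_gcd_eq_one]
    simpa using hg
  have hdvd3 : (s : ℤ) ∣ ((r : ℤ) - r') := (IsCoprime.dvd_of_dvd_mul_left hcop.symm hdvd2)
  have hrr : (r : ℤ) = r' := by
    rcases hdvd3 with ⟨m, hm⟩
    have hm0 : m = 0 := by nlinarith [hrs, hr', hs0]
    rw [hm0, mul_zero] at hm; omega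
  have hr'eq : r' = r := by omega
  subst hr'eq
  have : (p' : ℤ) = k := by
    have hk' : (q : ℤ) * r - 1 = s * k := hk
    nlinarith [hs0]
  exact Prod.ext (by omega) rfl
end

section
/- Let (p̂/q̂, r̂/ŝ) be a Farey pair of order n with q̂ < ŝ, and let c ≥ 2 be a natural number. Suppose the fractional parts of c·p̂/q̂ and c·r̂/ŝ, taken in order, form a Farey pair of order n, and that ⌊c·p̂/q̂⌋ = ⌊c·r̂/ŝ⌋. Write c = c_q · c_s · c₀ where c_q = gcd(c, q̂), c_s = gcd(c, ŝ). Then c₀ = 1 and at most one of c_q, c_s exceeds 1; in particular, c divides q̂ or c divides ŝ. -/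
set_option maxHeartbeats 1000000

/-- x is a Farey fraction of order n. -/
def FareyFrac (n : ℕ) (x : ℚ) : Prop := 0 ≤ x ∧ x < 1 ∧ x.den ≤ n

/-- (x, y) is a Farey pair of order n. -/
def IsFareyPairQ (n : ℕ) (x y : ℚ) : Prop :=
  FareyFrac n x ∧ FareyFrac n y ∧ x < y ∧ n < x.den + y.den ∧
    (x.den : ℤ) * y.num - x.num * (y.den : ℤ) = 1

private lemma den_sub_intCast (x : ℚ) (m : ℤ) : (x - (m : ℚ)).den = x.den := by
  refine Nat.dvd_antisymm ?_ ?_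
  · have h := Rat.add_den_dvd x (-(m : ℚ))
    simpa [sub_eq_add_neg] using h
  · have h := Rat.add_den_dvd (x - (m : ℚ)) (m : ℚ)
    simpa using h

private lemma den_of_div (a b g a' b' : ℕ) (hb : 0 < b) (hg : Nat.gcd a b = g)
    (ha' : a = g * a') (hb' : b = g * b') :
    ((a : ℚ) / (b : ℚ)).den = b' := by
  have hg0 : 0 < g := hg ▸ Nat.gcd_pos_of_pos_right a hb
  have hb'0 : 0 < b' := Nat.pos_of_ne_zero (by rintro rfl; rw [mul_zero] at hb'; omega)
  have hcop : Nat.Coprime a' b' := by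
    have := Nat.coprime_div_gcd_div_gcd (hg ▸ hg0 : 0 < Nat.gcd a b)
    rwa [hg, ha', hb', Nat.mul_div_cancel_left _ hg0, Nat.mul_div_cancel_left _ hg0] at this
  have key : (((a' : ℤ) / (b' : ℤ) : ℚ).den : ℤ) = (b' : ℤ) := by
    apply Rat.den_div_eq_of_coprime (by exact_mod_cast (by omega : 0 < b'))
    simpa using hcop
  have hx : ((a : ℚ) / (b : ℚ)) = ((a' : ℤ) : ℚ) / ((b' : ℤ) : ℚ) := by
    subst ha' hb'
    push_cast
    rw [mul_div_mul_left]
    exact_mod_cast hg0.ne'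
  rw [hx]
  exact_mod_cast key

/-- If (p̂/q̂, r̂/ŝ) is a Farey pair of order n with q̂ < ŝ, c ≥ 2, the
fractional parts of c·p̂/q̂ and c·r̂/ŝ (taken in order) form a Farey pair of order n,
and ⌊c·p̂/q̂⌋ = ⌊c·r̂/ŝ⌋, then writing c = c_q·c_s·c₀ with c_q = gcd(c,q̂),
c_s = gcd(c,ŝ), we have c₀ = 1 and at most one of c_q, c_s exceeds 1; in particular
c ∣ q̂ or c ∣ ŝ. -/
theorem power_farey_pair_divides (n c phat qhat rhat shat cq cs c₀ : ℕ)
    (hp : phat < qhat) (hr : rhat < shat) (hqn : qhat ≤ n) (hsn : shat ≤ n)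
    (hgq : Nat.gcd phat qhat = 1) (hgs : Nat.gcd rhat shat = 1)
    (hqs : qhat < shat) (hden : n < qhat + shat)
    (hfp : (qhat : ℤ) * rhat - (phat : ℤ) * shat = 1)
    (hc : 2 ≤ c)
    (hfloor : ⌊(c * phat : ℚ) / qhat⌋ = ⌊(c * rhat : ℚ) / shat⌋)
    (hpair : IsFareyPairQ n
      (min (Int.fract ((c * phat : ℚ) / qhat)) (Int.fract ((c * rhat : ℚ) / shat)))
      (max (Int.fract ((c * phat : ℚ) / qhat)) (Int.fract ((c * rhat : ℚ) / shat))))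
    (hcq : cq = Nat.gcd c qhat) (hcs : cs = Nat.gcd c shat)
    (hc0 : c = cq * cs * c₀) :
    c₀ = 1 ∧ (cq = 1 ∨ cs = 1) ∧ (c ∣ qhat ∨ c ∣ shat) := by
  have hq0 : 0 < qhat := lt_of_le_of_lt (Nat.zero_le _) hp
  have hs0 : 0 < shat := lt_of_le_of_lt (Nat.zero_le _) hr
  have hcq0 : 0 < cq := hcq ▸ Nat.gcd_pos_of_pos_right c hq0
  have hcs0 : 0 < cs := hcs ▸ Nat.gcd_pos_of_pos_right c hs0
  have hcqq : cq ∣ qhat := hcq ▸ Nat.gcd_dvd_right c qhat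
  have hcss : cs ∣ shat := hcs ▸ Nat.gcd_dvd_right c shat
  set q' : ℕ := qhat / cq with hq'def
  set s' : ℕ := shat / cs with hs'def
  have hq' : qhat = cq * q' := (Nat.mul_div_cancel' hcqq).symm
  have hs' : shat = cs * s' := (Nat.mul_div_cancel' hcss).symm
  have hq'0 : 0 < q' := by
    rcases Nat.eq_zero_or_pos q' with h | h
    · rw [h, mul_zero] at hq'; omega
    · exact h
  have hs'0 : 0 < s' := by
    rcases Nat.eq_zero_or_pos s' with h | h
    · rw [h, mul_zero] at hs'; omega
    · exact h
  set x : ℚ := (c * phat : ℚ) / qhat with hxdef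
  set y : ℚ := (c * rhat : ℚ) / shat with hydef
  -- denominators of x and y
  have hgcdx : Nat.gcd (c * phat) qhat = cq := by
    rw [Nat.Coprime.gcd_mul_right_cancel c hgq, hcq]
  have hgcdy : Nat.gcd (c * rhat) shat = cs := by
    rw [Nat.Coprime.gcd_mul_right_cancel c hgs, hcs]
  have hxden : x.den = q' := by
    have hdvd : cq ∣ c * phat := hgcdx ▸ Nat.gcd_dvd_left _ _
    have hx : x = ((c * phat : ℕ) : ℚ) / ((qhat : ℕ) : ℚ) := by push_cast [hxdef]; ring
    rw [hx]
    exact den_of_div (c * phat) qhat cq ((c * phat) / cq) q' hq0 hgcdx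
      (Nat.mul_div_cancel' hdvd).symm hq'
  have hyden : y.den = s' := by
    have hdvd : cs ∣ c * rhat := hgcdy ▸ Nat.gcd_dvd_left _ _
    have hy : y = ((c * rhat : ℕ) : ℚ) / ((shat : ℕ) : ℚ) := by push_cast [hydef]; ring
    rw [hy]
    exact den_of_div (c * rhat) shat cs ((c * rhat) / cs) s' hs0 hgcdy
      (Nat.mul_div_cancel' hdvd).symm hs'
  set X : ℚ := Int.fract x with hXdef
  set Y : ℚ := Int.fract y with hYdef
  have hXden : X.den = q' := by
    rw [hXdef, Int.fract, den_sub_intCast, hxden]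
  have hYden : Y.den = s' := by
    rw [hYdef, Int.fract, den_sub_intCast, hyden]
  -- y - x = c / (qhat * shat)
  have hq0' : (qhat : ℚ) ≠ 0 := by exact_mod_cast hq0.ne'
  have hs0' : (shat : ℚ) ≠ 0 := by exact_mod_cast hs0.ne'
  have hsub : y - x = (c : ℚ) / ((qhat : ℚ) * shat) := by
    rw [hxdef, hydef]
    have hfpq : (qhat : ℚ) * rhat - (phat : ℚ) * shat = 1 := by exact_mod_cast hfp
    have h : (c * rhat : ℚ) / shat - (c * phat : ℚ) / qhat
        = (c : ℚ) * ((qhat : ℚ) * rhat - (phat : ℚ) * shat) / ((qhat : ℚ) * shat) := by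
      field_simp
    rw [h, hfpq, mul_one]
  have hsubpos : 0 < y - x := by
    rw [hsub]
    positivity
  have hYX : Y - X = y - x := by
    rw [hXdef, hYdef, Int.fract, Int.fract, hfloor]
    ring
  have hXY : X < Y := by
    have := hsubpos
    rw [← hYX] at this
    linarith
  have hmin : min X Y = X := min_eq_left hXY.le
  have hmax : max X Y = Y := max_eq_right hXY.le
  rw [hmin, hmax] at hpair
  obtain ⟨_, _, _, hn, hdet⟩ := hpair
  -- Y - X = 1 / (X.den * Y.den)
  have hXd0 : (X.den : ℚ) ≠ 0 := by exact_mod_cast X.den_nz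
  have hYd0 : (Y.den : ℚ) ≠ 0 := by exact_mod_cast Y.den_nz
  have hdiff : Y - X = 1 / ((X.den : ℚ) * Y.den) := by
    have hdetq : (X.den : ℚ) * Y.num - (X.num : ℚ) * Y.den = 1 := by exact_mod_cast hdet
    rw [eq_div_iff (by positivity)]
    have hXe : (X.num : ℚ) = X * X.den := (div_eq_iff hXd0).mp (Rat.num_div_den X)
    have hYe : (Y.num : ℚ) = Y * Y.den := (div_eq_iff hYd0).mp (Rat.num_div_den Y)
    rw [hXe, hYe] at hdetq
    linear_combination hdetq
  -- c * (q' * s') = qhat * shat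
  have hkey : c * (q' * s') = qhat * shat := by
    have h1 : (c : ℚ) / ((qhat : ℚ) * shat) = 1 / ((q' : ℚ) * s') := by
      rw [← hsub, ← hYX, hdiff, hXden, hYden]
    have h2 : (c : ℚ) * ((q' : ℚ) * s') = (qhat : ℚ) * shat := by
      have hq'0' : (q' : ℚ) ≠ 0 := by exact_mod_cast hq'0.ne'
      have hs'0' : (s' : ℚ) ≠ 0 := by exact_mod_cast hs'0.ne'
      field_simp at h1
      linarith
    exact_mod_cast h2
  -- c = cq * cs
  have hceq : c = cq * cs := by
    have : c * (q' * s') = (cq * cs) * (q' * s') := by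
      rw [hkey, hq', hs']; ring
    exact Nat.eq_of_mul_eq_mul_right (Nat.mul_pos hq'0 hs'0) this
  have hc0one : c₀ = 1 := by
    rw [hceq] at hc0
    have hpos : 0 < cq * cs := Nat.mul_pos hcq0 hcs0
    have h1 : (cq * cs) * 1 = (cq * cs) * c₀ := by rw [mul_one]; exact hc0
    exact (Nat.eq_of_mul_eq_mul_left hpos h1).symm
  -- at most one of cq, cs exceeds 1
  have hn' : n < q' + s' := by rwa [hXden, hYden] at hn
  have hone : cq = 1 ∨ cs = 1 := by
    by_contra h
    push_neg at h
    have h1 : 2 ≤ cq := by omega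
    have h2 : 2 ≤ cs := by omega
    have hA : 2 * q' ≤ qhat := by rw [hq']; exact Nat.mul_le_mul_right q' h1
    have hB : 2 * s' ≤ shat := by rw [hs']; exact Nat.mul_le_mul_right s' h2
    omega
  refine ⟨hc0one, hone, ?_⟩
  rcases hone with h | h
  · right
    rw [hceq, h, one_mul]
    exact hcss
  · left
    rw [hceq, h, mul_one]
    exact hcqq
end

section
/- Let (p̂/q̂, r̂/ŝ) be a Farey pair of order n with q̂ < ŝ, and let c ≥ 2 divide ŝ, with ŝ = c·ŝ₀. Set a = ⌊c·p̂/q̂⌋ and suppose a = ⌊c·r̂/ŝ⌋ and the pair (c·p̂/q̂ - a, c·r̂/ŝ - a) is a Farey pair of order n. Then ŝ₀ < q̂ (it is impossible that q̂ < ŝ₀). -/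
/-- If (p̂/q̂, r̂/ŝ) is a Farey pair of order n with q̂ < ŝ, c ≥ 2 divides
ŝ (ŝ = c·ŝ₀), a = ⌊c·p̂/q̂⌋ = ⌊c·r̂/ŝ⌋, and (c·p̂/q̂ - a, c·r̂/ŝ - a) is a Farey pair of
order n, then ŝ₀ < q̂. -/
theorem power_farey_pair_div_s (n c phat qhat rhat shat shat₀ : ℕ) (a : ℤ)
    (hp : phat < qhat) (hr : rhat < shat) (hqn : qhat ≤ n) (hsn : shat ≤ n)
    (hgq : Nat.gcd phat qhat = 1) (hgs : Nat.gcd rhat shat = 1)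
    (hqs : qhat < shat) (hden : n < qhat + shat)
    (hfp : (qhat : ℤ) * rhat - (phat : ℤ) * shat = 1)
    (hc : 2 ≤ c) (hdvd : shat = c * shat₀)
    (ha : a = ⌊(c * phat : ℚ) / qhat⌋) (ha' : a = ⌊(c * rhat : ℚ) / shat⌋)
    (hpair : IsFareyPairQ n ((c * phat : ℚ) / qhat - a) ((c * rhat : ℚ) / shat - a)) :
    shat₀ < qhat := by
  by_contra hcon
  push_neg at hcon
  have hq0 : 0 < qhat := lt_of_le_of_lt (Nat.zero_le _) hp
  have hs0 : 0 < shat := lt_of_le_of_lt (Nat.zero_le _) hr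
  have hc0 : 0 < c := lt_of_lt_of_le (by norm_num) hc
  have hs₀0 : 0 < shat₀ := by
    rcases Nat.eq_zero_or_pos shat₀ with h | h
    · simp [hdvd, h] at hs0
    · exact h
  obtain ⟨_, _, _, hdsum, _⟩ := hpair
  -- x's denominator divides qhat
  have hx : ((c * phat : ℚ) / qhat - a) = (Rat.divInt (c * phat - a * qhat : ℤ) (qhat : ℤ)) := by
    rw [Rat.divInt_eq_div]
    have : (qhat : ℚ) ≠ 0 := by positivity
    field_simp
    push_cast
    ring
  have hxd : ((c * phat : ℚ) / qhat - a).den ≤ qhat := by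
    rw [hx]
    have := Rat.den_dvd (c * phat - a * qhat : ℤ) (qhat : ℤ)
    have h2 : (Rat.divInt (c * phat - a * qhat : ℤ) (qhat : ℤ)).den ∣ qhat := by
      exact_mod_cast this
    exact Nat.le_of_dvd hq0 h2
  -- y's denominator divides shat₀
  have hy : ((c * rhat : ℚ) / shat - a) = (Rat.divInt (rhat - a * shat₀ : ℤ) (shat₀ : ℤ)) := by
    rw [Rat.divInt_eq_div]
    have h1 : (shat : ℚ) ≠ 0 := by positivity
    have h2 : (shat₀ : ℚ) ≠ 0 := by positivity
    have hcast : (shat : ℚ) = c * shat₀ := by exact_mod_cast congrArg Nat.cast hdvd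
    field_simp
    rw [hcast]
    push_cast
    ring
  have hyd : ((c * rhat : ℚ) / shat - a).den ≤ shat₀ := by
    rw [hy]
    have := Rat.den_dvd (rhat - a * shat₀ : ℤ) (shat₀ : ℤ)
    have h2 : (Rat.divInt (rhat - a * shat₀ : ℤ) (shat₀ : ℤ)).den ∣ shat₀ := by
      exact_mod_cast this
    exact Nat.le_of_dvd hs₀0 h2
  have : n < qhat + shat₀ := lt_of_lt_of_le hdsum (Nat.add_le_add hxd hyd)
  have h2s : qhat + shat₀ ≤ 2 * shat₀ := by omega
  have hcs : 2 * shat₀ ≤ shat := by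
    rw [hdvd]; exact Nat.mul_le_mul_right _ hc
  omega
end

section
/- Fix q ≥ 1, d ≥ 2, and let θ ∈ [0, 2π]. Suppose μ > 0 satisfies μ^{s₁}·sin(qθ) - μ^{q d₁}·sin((s₁/d₁)θ - 2πr/d) - sin((q - s₁/d₁)θ + 2πr/d) = 0 evaluated at μ = 1 and θ = 2πp/q, where qr - ps = 1, δ = gcd(d,s), s = s₁δ, d = d₁δ. Then implicit differentiation of this equation gives: the derivative ∂μ/∂θ at θ = 2πp/q (with μ(2πp/q) = 1) satisfies (∂μ/∂θ)·sin(2π/(qd)) = (1/d₁)·(cos(2π/(qd)) - 1). Consequently, for ρ(θ) = μ(θ)^{d₁}, one has (∂ρ/∂θ)|_{θ=2πp/q}·sin(2π/(qd)) = cos(2π/(qd)) - 1. -/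
/-!
Differentiate the defining equation along `θ` at `θ₀ = 2πp/q`. There `μ = 1` and `qθ₀ ∈ 2πℤ`,
while the Farey relation `qr - ps = 1` turns `(s₁/d₁)θ₀ - 2πr/d = (s/d)θ₀ - 2πr/d` into
`-2π/(qd)`. The terms carrying the factor `s₁/d₁` then cancel, leaving
`q (1 - cos (2π/(qd))) + q d₁ μ'(θ₀) sin (2π/(qd)) = 0`. The statement for `ρ = μ^{d₁}` follows
from `ρ'(θ₀) = d₁ μ'(θ₀)`.
-/

open Real Filter Topology

/-- The left-hand side of the defining equation, with `x` in place of `μ θ`, `α = s₁/d₁` and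
`β = 2πr/d`. -/
noncomputable def arcFunction (a b : ℕ) (q α β x θ : ℝ) : ℝ :=
  x ^ a * sin (q * θ) - x ^ b * sin (α * θ - β) - sin ((q - α) * θ + β)

theorem hasDerivAt_arcFunction_comp {μ : ℝ → ℝ} {m θ : ℝ} (a b : ℕ) (q α β : ℝ)
    (hμ : HasDerivAt μ m θ) :
    HasDerivAt (fun t => arcFunction a b q α β (μ t) t)
      (a * μ θ ^ (a - 1) * m * sin (q * θ) + μ θ ^ a * (cos (q * θ) * q)
        - (b * μ θ ^ (b - 1) * m * sin (α * θ - β) + μ θ ^ b * (cos (α * θ - β) * α))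
        - cos ((q - α) * θ + β) * (q - α)) θ := by
  have hlin : ∀ c e : ℝ, HasDerivAt (fun t : ℝ => c * t + e) c θ := fun c e => by
    simpa using ((hasDerivAt_id θ).const_mul c).add_const e
  have h₂ := (hlin α (-β)).sin
  simp only [← sub_eq_add_neg] at h₂
  exact (((hμ.fun_pow a).mul (by simpa using (hlin q 0).sin)).sub ((hμ.fun_pow b).mul h₂)).sub
    (hlin (q - α) β).sin

theorem arcFunction_implicit_deriv {μ : ℝ → ℝ} {m θ₀ : ℝ} {a b : ℕ} {q α β A : ℝ} (k : ℤ)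
    (hμ : HasDerivAt μ m θ₀) (hμ₁ : μ θ₀ = 1)
    (heq : ∀ᶠ θ in 𝓝 θ₀, arcFunction a b q α β (μ θ) θ = 0)
    (hq : q * θ₀ = k * (2 * π)) (hA : α * θ₀ - β = -A) :
    b * m * sin A = q * (cos A - 1) := by
  have hzero := (hasDerivAt_arcFunction_comp a b q α β hμ).unique
    ((hasDerivAt_const θ₀ 0).congr_of_eventuallyEq heq)
  have hshift : (q - α) * θ₀ + β = A + k * (2 * π) := by linear_combination hq - hA
  have hsin : sin (k * (2 * π)) = 0 := by simpa using sin_add_int_mul_two_pi 0 k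
  rw [hshift, hA, hq, hsin, hμ₁, cos_int_mul_two_pi, cos_add_int_mul_two_pi, sin_neg,
    cos_neg] at hzero
  linear_combination hzero

theorem farey_angle {p q r s : ℤ} {d : ℝ} (hfarey : q * r - p * s = 1) (hq : q ≠ 0)
    (hd : d ≠ 0) :
    s / d * (2 * π * p / q) - 2 * π * r / d = -(2 * π / (q * d)) := by
  have hq' : (q : ℝ) ≠ 0 := by exact_mod_cast hq
  have hfarey' : (q : ℝ) * r - p * s = 1 := by exact_mod_cast hfarey
  field_simp
  linear_combination -hfarey'

theorem deriv_at_arc_endpoint_general (q d p r s δ s₁ d₁ : ℕ)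
    (hq : 1 ≤ q) (hd : 2 ≤ d)
    (hfarey : (q : ℤ) * r - (p : ℤ) * s = 1)
    (hs : s = s₁ * δ) (hd1 : d = d₁ * δ)
    (μ : ℝ → ℝ)
    (hdiff : DifferentiableAt ℝ μ (2 * π * p / q))
    (hμ : μ (2 * π * p / q) = 1)
    (heq : ∀ᶠ θ in nhds (2 * π * p / q),
      (μ θ) ^ s₁ * Real.sin ((q : ℝ) * θ)
        - (μ θ) ^ (q * d₁) * Real.sin ((s₁ : ℝ) / (d₁ : ℝ) * θ - 2 * π * r / d)
        - Real.sin (((q : ℝ) - (s₁ : ℝ) / (d₁ : ℝ)) * θ + 2 * π * r / d) = 0) :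
    deriv μ (2 * π * p / q) * Real.sin (2 * π / (q * d))
        = (1 / (d₁ : ℝ)) * (Real.cos (2 * π / (q * d)) - 1) ∧
      deriv (fun θ => (μ θ) ^ d₁) (2 * π * p / q) * Real.sin (2 * π / (q * d))
        = Real.cos (2 * π / (q * d)) - 1 := by
  have hq0 : (q : ℝ) ≠ 0 := by norm_cast; omega
  have hd0 : (d : ℝ) ≠ 0 := by norm_cast; omega
  have hδ0 : (δ : ℝ) ≠ 0 := by norm_cast; rintro rfl; omega
  have hd₁0 : (d₁ : ℝ) ≠ 0 := by norm_cast; rintro rfl; omega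
  have hslope : (s₁ : ℝ) / d₁ = s / d := by
    rw [hs, hd1]; push_cast; exact (mul_div_mul_right _ _ hδ0).symm
  have hderiv := hdiff.hasDerivAt
  have hangle : (s₁ : ℝ) / d₁ * (2 * π * p / q) - 2 * π * r / d = -(2 * π / (q * d)) := by
    rw [hslope]; exact_mod_cast farey_angle hfarey (by exact_mod_cast hq0) hd0
  have himplicit := arcFunction_implicit_deriv p hderiv hμ heq (by push_cast; field_simp) hangle
  have hmain : deriv μ (2 * π * p / q) * Real.sin (2 * π / (q * d))
      = 1 / d₁ * (Real.cos (2 * π / (q * d)) - 1) := by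
    push_cast at himplicit
    field_simp
    exact mul_left_cancel₀ hq0 (by linear_combination himplicit)
  refine ⟨hmain, ?_⟩
  rw [(hderiv.fun_pow d₁).deriv, hμ, one_pow, mul_one, mul_assoc, hmain]
  field_simp

/-- Implicit differentiation of the defining equation of μ at
θ₀ = 2πp/q with μ(θ₀) = 1 yields
(∂μ/∂θ)·sin(2π/(qd)) = (1/d₁)(cos(2π/(qd)) - 1), and consequently for
ρ = μ^{d₁} one has (∂ρ/∂θ)·sin(2π/(qd)) = cos(2π/(qd)) - 1. -/
theorem deriv_at_arc_endpoint (q d p r s δ s₁ d₁ : ℕ)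
    (hq : 1 ≤ q) (hd : 2 ≤ d)
    (hfarey : (q : ℤ) * r - (p : ℤ) * s = 1)
    (hδ : δ = Nat.gcd d s) (hs : s = s₁ * δ) (hd1 : d = d₁ * δ)
    (μ : ℝ → ℝ)
    (hdiff : DifferentiableAt ℝ μ (2 * π * p / q))
    (hμ : μ (2 * π * p / q) = 1)
    (heq : ∀ᶠ θ in nhds (2 * π * p / q),
      (μ θ) ^ s₁ * Real.sin ((q : ℝ) * θ)
        - (μ θ) ^ (q * d₁) * Real.sin ((s₁ : ℝ) / (d₁ : ℝ) * θ - 2 * π * r / d)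
        - Real.sin (((q : ℝ) - (s₁ : ℝ) / (d₁ : ℝ)) * θ + 2 * π * r / d) = 0) :
    deriv μ (2 * π * p / q) * Real.sin (2 * π / (q * d))
        = (1 / (d₁ : ℝ)) * (Real.cos (2 * π / (q * d)) - 1) ∧
      deriv (fun θ => (μ θ) ^ d₁) (2 * π * p / q) * Real.sin (2 * π / (q * d))
        = Real.cos (2 * π / (q * d)) - 1 :=
  deriv_at_arc_endpoint_general q d p r s δ s₁ d₁ hq hd hfarey hs hd1 μ hdiff hμ heq
end

section
/- Let n = qd with d ≥ 2, gcd(qd, z) = 1 and 1 ≤ z ≤ q-1. Let Γ̂ = C(1,...,n) + {(n - z, 1)} be the digraph consisting of the n-cycle 1→2→...→n→1 together with the extra edge from vertex s = qd - z to vertex 1. Then in the d-th strong power Γ̂^(d), the n-cycle contributes d disjoint q-cycles C_j on vertex sets {j, j+d, j+2d, ..., j+(q-1)d} for j = 1,...,d, and the extra edge (s,1) contributes exactly the d edges e_t = (s - t + 1, 1 + d - t) for t = 1,...,d. -/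
private lemma mod_succ' (n a : ℕ) (hn : 2 ≤ n) :
    (1 + a % n) % n = (1 + a) % n := by
  rw [Nat.add_mod 1 a n, Nat.mod_eq_of_lt (show 1 < n by omega)]

/-- `hasWalk E len u v`: there is a directed walk of length `len` from `u` to `v`
in the digraph with edge relation `E`. -/
def hasWalk (E : ℕ → ℕ → Prop) (len u v : ℕ) : Prop :=
  ∃ f : ℕ → ℕ, f 0 = u ∧ f len = v ∧ ∀ i, i < len → E (f i) (f (i + 1))

private lemma cyc_walk_eq (n : ℕ) (hn : 2 ≤ n) (f : ℕ → ℕ) (u k : ℕ)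
    (hu1 : 1 ≤ u) (hun : u ≤ n) (hf0 : f 0 = u)
    (hE : ∀ i, i < k → 1 ≤ f i ∧ f i ≤ n ∧ f (i+1) = 1 + f i % n) :
    ∀ i, i ≤ k → f i = 1 + (u - 1 + i) % n := by
  intro i
  induction i with
  | zero =>
    intro _
    rw [hf0, Nat.add_zero, Nat.mod_eq_of_lt (by omega)]
    omega
  | succ m ih =>
    intro hmk
    have h1 := (hE m (by omega)).2.2
    rw [h1, ih (by omega), mod_succ' n _ hn,
      show (1 + (u - 1 + m)) = u - 1 + (m + 1) from by omega]

private lemma cyc_walk_exists (n : ℕ) (hn : 2 ≤ n) (u len : ℕ) (hu1 : 1 ≤ u) (hun : u ≤ n) :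
    hasWalk (fun a b => 1 ≤ a ∧ a ≤ n ∧ b = 1 + a % n) len u (1 + (u - 1 + len) % n) := by
  refine ⟨fun i => 1 + (u - 1 + i) % n, ?_, rfl, ?_⟩
  · show 1 + (u - 1 + 0) % n = u
    rw [Nat.add_zero, Nat.mod_eq_of_lt (by omega)]
    omega
  · intro i _
    have hlt := Nat.mod_lt (u - 1 + i) (show 0 < n by omega)
    show 1 ≤ 1 + (u - 1 + i) % n ∧ 1 + (u - 1 + i) % n ≤ n ∧
      1 + (u - 1 + (i + 1)) % n = 1 + (1 + (u - 1 + i) % n) % n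
    refine ⟨by omega, by omega, ?_⟩
    rw [mod_succ' n _ hn, show (1 + (u - 1 + i)) = u - 1 + (i + 1) from by omega]

private lemma comp_lem (q d j ℓ : ℕ) (hq : 2 ≤ q) (hd : 1 ≤ d)
    (hj1 : 1 ≤ j) (hjd : j ≤ d) (hl : ℓ < q) :
    1 + (j + ℓ * d - 1 + d) % (q * d) = j + ((ℓ + 1) % q) * d := by
  have hmul : (ℓ + 1) * d = ℓ * d + d := by ring
  have he : j + ℓ * d - 1 + d = (j - 1) + (ℓ + 1) * d := by omega
  rw [he]
  by_cases hc : ℓ + 1 = q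
  · rw [hc, Nat.add_mod_right, Nat.mod_eq_of_lt, Nat.mod_self]
    · omega
    · have : 1 * d ≤ q * d := Nat.mul_le_mul_right d (by omega)
      omega
  · have h2 : (ℓ + 1) * d ≤ (q - 1) * d := Nat.mul_le_mul_right d (by omega)
    have h3 : (q - 1) * d + 1 * d = q * d := by
      rw [← Nat.add_mul]; congr 1; omega
    rw [Nat.mod_eq_of_lt (by omega), Nat.mod_eq_of_lt (show ℓ + 1 < q by omega)]
    omega

/-- For n = qd, gcd(qd,z)=1, z ∈ {1,...,q-1}, s = qd - z, in the d-th
strong power of Γ̂ = C(1,...,n) + {(s,1)}: the n-cycle contributes d disjoint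
q-cycles on vertex sets {j + ℓd : ℓ = 0,...,q-1}, j = 1,...,d, and the extra edge
(s,1) contributes exactly the d edges e_t = (s - t + 1, 1 + d - t), t = 1,...,d. -/
theorem strong_power_typeI_digraph (n q d z s : ℕ) (hd : 2 ≤ d) (hn : n = q * d)
    (hg : Nat.gcd (q * d) z = 1) (hz1 : 1 ≤ z) (hz2 : z ≤ q - 1) (hs : s = q * d - z) :
    let Ecyc : ℕ → ℕ → Prop := fun u v => 1 ≤ u ∧ u ≤ n ∧ v = 1 + u % n
    let E : ℕ → ℕ → Prop := fun u v => Ecyc u v ∨ (u = s ∧ v = 1)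
    (∀ j ℓ, 1 ≤ j → j ≤ d → ℓ < q →
        hasWalk Ecyc d (j + ℓ * d) (j + ((ℓ + 1) % q) * d)) ∧
    (∀ u v, 1 ≤ u → u ≤ n → hasWalk Ecyc d u v →
        ∃ j ℓ, 1 ≤ j ∧ j ≤ d ∧ ℓ < q ∧ u = j + ℓ * d ∧ v = j + ((ℓ + 1) % q) * d) ∧
    (∀ t, 1 ≤ t → t ≤ d → hasWalk E d (s - t + 1) (1 + d - t)) ∧
    (∀ u v, 1 ≤ u → u ≤ n → hasWalk E d u v → ¬ hasWalk Ecyc d u v →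
        ∃ t, 1 ≤ t ∧ t ≤ d ∧ u = s - t + 1 ∧ v = 1 + d - t) := by
  intro Ecyc E
  have hq : 2 ≤ q := by omega
  have hnd : 2 * d ≤ n := by
    have := Nat.mul_le_mul_right d hq; omega
  have hn2 : 2 ≤ n := by omega
  have hsd : d + 1 ≤ s := by
    have h1 : q * (d - 1) + q * 1 = q * d := by rw [← Nat.mul_add]; congr 1; omega
    have h2 : 2 * (d - 1) ≤ q * (d - 1) := Nat.mul_le_mul_right _ hq
    omega
  have hsn : s + 1 ≤ n := by
    have : q * 1 ≤ q * d := Nat.mul_le_mul_left q (by omega)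
    omega
  refine ⟨?_, ?_, ?_, ?_⟩
  · -- part 1
    intro j ℓ hj1 hjd hlq
    have hmul : (ℓ + 1) * d = ℓ * d + d := by ring
    have hub : (ℓ + 1) * d ≤ q * d := Nat.mul_le_mul_right d (by omega)
    have hun : j + ℓ * d ≤ n := by omega
    have hw := cyc_walk_exists n hn2 (j + ℓ * d) d (by omega) hun
    have he := comp_lem q d j ℓ hq (by omega) hj1 hjd hlq
    rw [← hn] at he
    rw [← he]
    exact hw
  · -- part 2
    intro u v hu1 hun hw
    obtain ⟨f, hf0, hfd, hEw⟩ := hw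
    have hval := cyc_walk_eq n hn2 f u d hu1 hun hf0 (fun i hi => hEw i hi) d le_rfl
    have hdm := Nat.div_add_mod (u - 1) d
    have hcm : ((u - 1) / d) * d = d * ((u - 1) / d) := Nat.mul_comm _ _
    have hjd : (u - 1) % d < d := Nat.mod_lt _ (by omega)
    have hlq : (u - 1) / d < q := by
      have h1 : u - 1 < d * q := by
        have h2 : d * q = q * d := Nat.mul_comm _ _
        omega
      exact Nat.div_lt_of_lt_mul h1
    have hueq : u = ((u - 1) % d + 1) + ((u - 1) / d) * d := by omega
    have he := comp_lem q d ((u - 1) % d + 1) ((u - 1) / d) hq (by omega) (by omega) (by omega) hlq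
    rw [← hn, ← hueq] at he
    have hv : v = ((u - 1) % d + 1) + (((u - 1) / d + 1) % q) * d := by
      rw [← hfd, hval]
      exact he
    exact ⟨(u - 1) % d + 1, (u - 1) / d, by omega, by omega, hlq, hueq, hv⟩
  · -- part 3
    intro t ht1 htd
    refine ⟨fun i => if i < t then s - t + 1 + i else i + 1 - t, ?_, ?_, ?_⟩
    · simp only [if_pos (show 0 < t by omega)]
    · simp only [if_neg (show ¬ (d < t) by omega)]
      omega
    · intro i hid
      by_cases hc : i + 1 < t
      · left
        simp only [if_pos (show i < t by omega), if_pos hc]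
        refine ⟨by omega, by omega, ?_⟩
        rw [Nat.mod_eq_of_lt (by omega)]
        omega
      · by_cases hc2 : i < t
        · right
          simp only [if_pos hc2, if_neg (show ¬ (i + 1 < t) by omega)]
          constructor <;> omega
        · left
          simp only [if_neg hc2, if_neg (show ¬ (i + 1 < t) by omega)]
          refine ⟨by omega, by omega, ?_⟩
          rw [Nat.mod_eq_of_lt (by omega)]
          omega
  · -- part 4
    intro u v hu1 hun hw hnw
    obtain ⟨f, hf0, hfd, hEw⟩ := hw
    classical
    have hex : ∃ k, k < d ∧ ¬ (1 ≤ f k ∧ f k ≤ n ∧ f (k+1) = 1 + f k % n) := by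
      by_contra hcon
      push_neg at hcon
      exact hnw ⟨f, hf0, hfd, fun i hi => hcon i hi⟩
    obtain ⟨k, ⟨hkd, hknot⟩, hkmin⟩ :
        ∃ k, (k < d ∧ ¬ (1 ≤ f k ∧ f k ≤ n ∧ f (k+1) = 1 + f k % n)) ∧
          ∀ m, m < k → ¬ (m < d ∧ ¬ (1 ≤ f m ∧ f m ≤ n ∧ f (m+1) = 1 + f m % n)) :=
      ⟨Nat.find hex, Nat.find_spec hex, fun m hm => Nat.find_min hex hm⟩
    have hcycpre : ∀ m, m < k → 1 ≤ f m ∧ f m ≤ n ∧ f (m+1) = 1 + f m % n := by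
      intro m hm
      by_contra hcc
      exact hkmin m hm ⟨by omega, hcc⟩
    have hfk : f k = 1 + (u - 1 + k) % n :=
      cyc_walk_eq n hn2 f u k hu1 hun hf0 hcycpre k le_rfl
    have hsk : f k = s ∧ f (k+1) = 1 := by
      rcases hEw k hkd with h | h
      · exact absurd h hknot
      · exact h
    have hfks : 1 + (u - 1 + k) % n = s := by rw [← hfk]; exact hsk.1
    have huval : u - 1 + k = s - 1 := by
      rcases Nat.lt_or_ge (u - 1 + k) n with hcase | hcase
      · rw [Nat.mod_eq_of_lt hcase] at hfks
        omega
      · have h1 : (u - 1 + k) % n = (u - 1 + k - n) % n := Nat.mod_eq_sub_mod hcase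
        have h2 : u - 1 + k - n < n := by omega
        rw [h1, Nat.mod_eq_of_lt h2] at hfks
        omega
    have hpost : ∀ m, k + 1 ≤ m → m ≤ d → f m = m - k := by
      intro m
      induction m with
      | zero => intro h1 _; omega
      | succ p ih =>
        intro h1 h2
        by_cases hp : k + 1 ≤ p
        · have hfp : f p = p - k := ih hp (by omega)
          rcases hEw p (by omega) with h | h
          · rw [h.2.2, hfp, Nat.mod_eq_of_lt (by omega)]
            omega
          · exfalso
            have := h.1
            omega
        · have hpk : p = k := by omega
          rw [hpk, hsk.2]
          omega
    have hvd : v = d - k := by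
      have := hpost d (by omega) le_rfl
      omega
    exact ⟨k + 1, by omega, by omega, by omega, by omega⟩
end
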